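/- arXiv:2105.08477 — 5 statements merged into one kernel-verified Lean document; each statement's English description precedes it below -/
import Mathlib

section
/- Fix λ > 0, H > 0, L > 0 and real numbers Ω ≠ 0 and Ψ ≠ 0. For d > 0 define the interference power I₁₂²(d) = (d⁴/(H²L²)) · (sin²(πHΩ/λ)/sin²(πdΩ/λ)) · (sin²(πLΨ/λ)/sin²(πdΨ/λ)). Then lim_{d→0⁺} I₁₂²(d) = sinc²(HΩ/λ) · sinc²(LΨ/λ). -/
set_option maxHeartbeats 1000000

open Real hiding sinc
open Filter

lemma sin_div_self_tendsto : Tendsto (fun x : ℝ => Real.sin x / x) (nhdsWithin 0 {0}ᶜ) (nhds 1) := by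
  have h := hasDerivAt_iff_tendsto_slope.mp (Real.hasDerivAt_sin 0)
  simp only [Real.cos_zero] at h
  refine h.congr (fun x => ?_)
  simp [slope_def_field]

lemma aux_tendsto (c : ℝ) (hc : c ≠ 0) :
    Tendsto (fun d : ℝ => ((Real.sin (c * d) / (c * d))⁻¹) ^ 2)
      (nhdsWithin 0 (Set.Ioi 0)) (nhds 1) := by
  have h1 : Tendsto (fun d : ℝ => c * d) (nhdsWithin 0 (Set.Ioi 0)) (nhdsWithin 0 {0}ᶜ) := by
    apply tendsto_nhdsWithin_of_tendsto_nhds_of_eventually_within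
    · have : Tendsto (fun d : ℝ => c * d) (nhds 0) (nhds (c * 0)) :=
        tendsto_const_nhds.mul tendsto_id
      rw [mul_zero] at this
      exact this.mono_left nhdsWithin_le_nhds
    · filter_upwards [self_mem_nhdsWithin] with d hd
      exact mul_ne_zero hc (ne_of_gt hd)
  have h2 : Tendsto (fun d : ℝ => Real.sin (c * d) / (c * d)) (nhdsWithin 0 (Set.Ioi 0)) (nhds 1) :=
    sin_div_self_tendsto.comp h1
  have := (h2.inv₀ one_ne_zero).pow 2
  simpa using this

lemma sin_ne_zero_of_abs_lt (x : ℝ) (hx : x ≠ 0) (h : |x| < Real.pi) : Real.sin x ≠ 0 := by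
  have h1 : 0 < |x| := abs_pos.mpr hx
  have h2 : Real.sin |x| ≠ 0 := ne_of_gt (Real.sin_pos_of_pos_of_lt_pi h1 h)
  rcases abs_cases x with ⟨he, _⟩ | ⟨he, _⟩
  · rwa [he] at h2
  · rw [he, Real.sin_neg] at h2
    exact fun hz => h2 (by rw [hz, neg_zero])

/-- `sinc x = sin(πx)/(πx)` for `x ≠ 0`, and `sinc 0 = 1`. -/
noncomputable def sinc (x : ℝ) : ℝ :=
  if x = 0 then 1 else Real.sin (Real.pi * x) / (Real.pi * x)

/-- Lemma 2: as the antenna size `d → 0⁺` (with the array dimensions `H`, `L` fixed),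
the squared interference gain converges to `sinc²(HΩ/λ) · sinc²(LΨ/λ)`. -/
theorem limiting_interference_gain (lam H L Ω Ψ : ℝ)
    (hlam : 0 < lam) (hH : 0 < H) (hL : 0 < L) (hΩ : Ω ≠ 0) (hΨ : Ψ ≠ 0) :
    Filter.Tendsto
      (fun d : ℝ =>
        d ^ 4 / (H ^ 2 * L ^ 2) *
          (Real.sin (Real.pi * H * Ω / lam) ^ 2 / Real.sin (Real.pi * d * Ω / lam) ^ 2) *
          (Real.sin (Real.pi * L * Ψ / lam) ^ 2 / Real.sin (Real.pi * d * Ψ / lam) ^ 2))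
      (nhdsWithin 0 (Set.Ioi 0))
      (nhds (sinc (H * Ω / lam) ^ 2 * sinc (L * Ψ / lam) ^ 2)) := by
  set a : ℝ := Real.pi * Ω / lam with ha_def
  set b : ℝ := Real.pi * Ψ / lam with hb_def
  have hπ : Real.pi ≠ 0 := Real.pi_ne_zero
  have hlam' : lam ≠ 0 := ne_of_gt hlam
  have ha : a ≠ 0 := div_ne_zero (mul_ne_zero hπ hΩ) hlam'
  have hb : b ≠ 0 := div_ne_zero (mul_ne_zero hπ hΨ) hlam'
  set K : ℝ := sinc (H * Ω / lam) ^ 2 * sinc (L * Ψ / lam) ^ 2 with hK_def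
  have hT : Tendsto
      (fun d : ℝ => K * ((Real.sin (a * d) / (a * d))⁻¹) ^ 2
        * ((Real.sin (b * d) / (b * d))⁻¹) ^ 2)
      (nhdsWithin 0 (Set.Ioi 0)) (nhds K) := by
    have hc : Tendsto (fun _ : ℝ => K) (nhdsWithin 0 (Set.Ioi 0)) (nhds K) := tendsto_const_nhds
    have := (hc.mul (aux_tendsto a ha)).mul (aux_tendsto b hb)
    simpa using this
  refine Tendsto.congr' ?_ hT
  have hε : (0:ℝ) < min (Real.pi / |a|) (Real.pi / |b|) :=
    lt_min (div_pos Real.pi_pos (abs_pos.mpr ha)) (div_pos Real.pi_pos (abs_pos.mpr hb))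
  filter_upwards [Ioo_mem_nhdsGT_of_mem (Set.mem_Ico.mpr ⟨le_refl 0, hε⟩)] with d hd
  obtain ⟨hd0, hdε⟩ := hd
  have hsa : Real.sin (a * d) ≠ 0 := by
    apply sin_ne_zero_of_abs_lt _ (mul_ne_zero ha (ne_of_gt hd0))
    rw [abs_mul, abs_of_pos hd0]
    calc |a| * d < |a| * (Real.pi / |a|) := by
          exact mul_lt_mul_of_pos_left (lt_of_lt_of_le hdε (min_le_left _ _)) (abs_pos.mpr ha)
      _ = Real.pi := by field_simp
  have hsb : Real.sin (b * d) ≠ 0 := by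
    apply sin_ne_zero_of_abs_lt _ (mul_ne_zero hb (ne_of_gt hd0))
    rw [abs_mul, abs_of_pos hd0]
    calc |b| * d < |b| * (Real.pi / |b|) := by
          exact mul_lt_mul_of_pos_left (lt_of_lt_of_le hdε (min_le_right _ _)) (abs_pos.mpr hb)
      _ = Real.pi := by field_simp
  have e1 : Real.pi * d * Ω / lam = a * d := by rw [ha_def]; ring
  have e2 : Real.pi * d * Ψ / lam = b * d := by rw [hb_def]; ring
  have e3 : Real.pi * H * Ω / lam = a * H := by rw [ha_def]; ring
  have e4 : Real.pi * L * Ψ / lam = b * L := by rw [hb_def]; ring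
  have e3' : Real.pi * (H * Ω / lam) = a * H := by rw [ha_def]; ring
  have e4' : Real.pi * (L * Ψ / lam) = b * L := by rw [hb_def]; ring
  have hHΩ : H * Ω / lam ≠ 0 := div_ne_zero (mul_ne_zero (ne_of_gt hH) hΩ) hlam'
  have hLΨ : L * Ψ / lam ≠ 0 := div_ne_zero (mul_ne_zero (ne_of_gt hL) hΨ) hlam'
  have hd' : d ≠ 0 := ne_of_gt hd0
  simp only [hK_def, sinc, if_neg hHΩ, if_neg hLΨ]
  rw [e1, e2, e3, e4, e3', e4']
  field_simp
end

section
/- Fix λ > 0, H > 0, L > 0, real numbers Ω ≠ 0 and Ψ ≠ 0, and p₁ ≥ 0, p₂ ≥ 0. For d > 0 let I₁₂²(d) = (d⁴/(H²L²)) · (sin²(πHΩ/λ)/sin²(πdΩ/λ)) · (sin²(πLΨ/λ)/sin²(πdΨ/λ)). Then the maximum ratio SINR of user 1 converges: lim_{d→0⁺} p₁LH/(p₂LH·I₁₂²(d) + 1) = p₁LH / (p₂LH·sinc²(HΩ/λ)·sinc²(LΨ/λ) + 1). -/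
open Filter


lemma sin_div_tendsto (c : ℝ) :
    Tendsto (fun d : ℝ => Real.sin (c * d) / d) (nhdsWithin 0 (Set.Ioi 0)) (nhds c) := by
  have hd : HasDerivAt (fun d : ℝ => Real.sin (c * d)) c 0 := by
    have := (Real.hasDerivAt_sin (c * 0)).comp 0 ((hasDerivAt_id (0:ℝ)).const_mul c)
    simpa [Function.comp_def] using this
  rw [hasDerivAt_iff_tendsto_slope] at hd
  have h := hd.mono_left (nhdsWithin_mono _ (show Set.Ioi (0:ℝ) ⊆ {0}ᶜ by intro x hx; exact ne_of_gt hx))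
  simpa [slope_fun_def, div_eq_inv_mul] using h

lemma key (c : ℝ) (hc : c ≠ 0) :
    Tendsto (fun d : ℝ => d / Real.sin (c * d)) (nhdsWithin 0 (Set.Ioi 0)) (nhds c⁻¹) := by
  have := (sin_div_tendsto c).inv₀ hc
  simpa [inv_div] using this


/-- Eq. (20): as `d → 0⁺`, the maximum ratio SINR of user 1 converges to
`p₁LH / (p₂LH · sinc²(HΩ/λ) · sinc²(LΨ/λ) + 1)`. -/
theorem limiting_mr_sinr (lam H L Ω Ψ p₁ p₂ : ℝ)
    (hlam : 0 < lam) (hH : 0 < H) (hL : 0 < L) (hΩ : Ω ≠ 0) (hΨ : Ψ ≠ 0)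
    (hp₁ : 0 ≤ p₁) (hp₂ : 0 ≤ p₂) :
    Filter.Tendsto
      (fun d : ℝ =>
        p₁ * L * H /
          (p₂ * L * H *
            (d ^ 4 / (H ^ 2 * L ^ 2) *
              (Real.sin (Real.pi * H * Ω / lam) ^ 2 / Real.sin (Real.pi * d * Ω / lam) ^ 2) *
              (Real.sin (Real.pi * L * Ψ / lam) ^ 2 / Real.sin (Real.pi * d * Ψ / lam) ^ 2)) + 1))
      (nhdsWithin 0 (Set.Ioi 0))
      (nhds (p₁ * L * H /
        (p₂ * L * H * (sinc (H * Ω / lam) ^ 2 * sinc (L * Ψ / lam) ^ 2) + 1))) := by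
  have hpi := Real.pi_ne_zero
  have hlam' := hlam.ne'
  set c₁ := Real.pi * Ω / lam with hc₁def
  set c₂ := Real.pi * Ψ / lam with hc₂def
  have hc₁ : c₁ ≠ 0 := div_ne_zero (mul_ne_zero hpi hΩ) hlam'
  have hc₂ : c₂ ≠ 0 := div_ne_zero (mul_ne_zero hpi hΨ) hlam'
  have h1 := key c₁ hc₁
  have h2 := key c₂ hc₂
  set A := Real.sin (Real.pi * H * Ω / lam) ^ 2
  set B := Real.sin (Real.pi * L * Ψ / lam) ^ 2
  -- E(d) tendsto
  have hE : Tendsto (fun d : ℝ =>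
      d ^ 4 / (H ^ 2 * L ^ 2) *
        (A / Real.sin (Real.pi * d * Ω / lam) ^ 2) *
        (B / Real.sin (Real.pi * d * Ψ / lam) ^ 2))
      (nhdsWithin 0 (Set.Ioi 0))
      (nhds (sinc (H * Ω / lam) ^ 2 * sinc (L * Ψ / lam) ^ 2)) := by
    have hmul : Tendsto (fun d : ℝ =>
        (A / H ^ 2) * (d / Real.sin (c₁ * d)) ^ 2 *
        ((B / L ^ 2) * (d / Real.sin (c₂ * d)) ^ 2))
        (nhdsWithin 0 (Set.Ioi 0))
        (nhds ((A / H ^ 2) * (c₁⁻¹) ^ 2 * ((B / L ^ 2) * (c₂⁻¹) ^ 2))) :=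
      ((tendsto_const_nhds.mul (h1.pow 2)).mul (tendsto_const_nhds.mul (h2.pow 2)))
    have heqf : ∀ d : ℝ,
        (A / H ^ 2) * (d / Real.sin (c₁ * d)) ^ 2 *
        ((B / L ^ 2) * (d / Real.sin (c₂ * d)) ^ 2) =
        d ^ 4 / (H ^ 2 * L ^ 2) *
          (A / Real.sin (Real.pi * d * Ω / lam) ^ 2) *
          (B / Real.sin (Real.pi * d * Ψ / lam) ^ 2) := by
      intro d
      have e1 : c₁ * d = Real.pi * d * Ω / lam := by rw [hc₁def]; ring
      have e2 : c₂ * d = Real.pi * d * Ψ / lam := by rw [hc₂def]; ring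
      rw [e1, e2, div_pow, div_pow]
      ring
    have heql : (A / H ^ 2) * (c₁⁻¹) ^ 2 * ((B / L ^ 2) * (c₂⁻¹) ^ 2) =
        sinc (H * Ω / lam) ^ 2 * sinc (L * Ψ / lam) ^ 2 := by
      have hne1 : H * Ω / lam ≠ 0 := div_ne_zero (mul_ne_zero hH.ne' hΩ) hlam'
      have hne2 : L * Ψ / lam ≠ 0 := div_ne_zero (mul_ne_zero hL.ne' hΨ) hlam'
      rw [sinc, sinc, if_neg hne1, if_neg hne2, hc₁def, hc₂def]
      have e1 : Real.pi * (H * Ω / lam) = Real.pi * H * Ω / lam := by ring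
      have e2 : Real.pi * (L * Ψ / lam) = Real.pi * L * Ψ / lam := by ring
      rw [e1, e2]
      field_simp
      simp only [A, B]
      ring_nf
    rw [← heql]
    exact hmul.congr heqf
  have hdenom : Tendsto (fun d : ℝ =>
      p₂ * L * H *
        (d ^ 4 / (H ^ 2 * L ^ 2) *
          (A / Real.sin (Real.pi * d * Ω / lam) ^ 2) *
          (B / Real.sin (Real.pi * d * Ψ / lam) ^ 2)) + 1)
      (nhdsWithin 0 (Set.Ioi 0))
      (nhds (p₂ * L * H * (sinc (H * Ω / lam) ^ 2 * sinc (L * Ψ / lam) ^ 2) + 1)) :=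
    ((tendsto_const_nhds.mul hE).add tendsto_const_nhds)
  have hne : p₂ * L * H * (sinc (H * Ω / lam) ^ 2 * sinc (L * Ψ / lam) ^ 2) + 1 ≠ 0 := by
    have : 0 ≤ p₂ * L * H * (sinc (H * Ω / lam) ^ 2 * sinc (L * Ψ / lam) ^ 2) := by positivity
    linarith
  exact tendsto_const_nhds.div hdenom hne
end

section
/- Fix L > 0, λ > 0 and Ψ ≠ 0. The function d ↦ (d²/L²) · sin²(πLΨ/λ)/sin²(πdΨ/λ) is monotonically nondecreasing on the interval (0, λ/|Ψ|); that is, for 0 < d₁ ≤ d₂ < λ/|Ψ|, (d₁²/L²)·sin²(πLΨ/λ)/sin²(πd₁Ψ/λ) ≤ (d₂²/L²)·sin²(πLΨ/λ)/sin²(πd₂Ψ/λ). Hence a smaller antenna size d leads to a smaller (or equal) interference gain. -/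
/-- On `(0, π)`, `x ≤ y` implies `x * sin y ≤ y * sin x` (concavity of `sin`). -/
lemma sin_concave_key {x y : ℝ} (hx : 0 < x) (hxy : x ≤ y) (hy : y < Real.pi) :
    x * Real.sin y ≤ y * Real.sin x := by
  have hy0 : 0 < y := lt_of_lt_of_le hx hxy
  have h0 : (0 : ℝ) ∈ Set.Icc 0 Real.pi := ⟨le_refl 0, Real.pi_pos.le⟩
  have hymem : y ∈ Set.Icc 0 Real.pi := ⟨hy0.le, hy.le⟩
  have ha : (0 : ℝ) ≤ 1 - x / y := by
    have : x / y ≤ 1 := (div_le_one hy0).2 hxy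
    linarith
  have hb : (0 : ℝ) ≤ x / y := by positivity
  have hab : (1 - x / y) + x / y = 1 := by ring
  have hcon := strictConcaveOn_sin_Icc.concaveOn.2 h0 hymem ha hb hab
  have hxy' : (1 - x / y) • (0 : ℝ) + (x / y) • y = x := by
    field_simp
    rw [smul_zero, zero_add, smul_eq_mul, div_mul_cancel₀ x hy0.ne']
  rw [hxy'] at hcon
  have : (x / y) * Real.sin y ≤ Real.sin x := by
    simpa [Real.sin_zero, smul_eq_mul] using hcon
  calc x * Real.sin y = y * ((x / y) * Real.sin y) := by field_simp
    _ ≤ y * Real.sin x := by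
        exact mul_le_mul_of_nonneg_left this hy0.le

/-- Eq. (24): for fixed `L`, `λ` and `Ψ ≠ 0`, the squared interference gain
`d ↦ (d²/L²)·sin²(πLΨ/λ)/sin²(πdΨ/λ)` is monotonically nondecreasing in the
antenna size `d` on `(0, λ/|Ψ|)`: a smaller `d` gives smaller (or equal)
interference. -/
theorem interference_monotone_in_antenna_size (L lam Ψ : ℝ)
    (hL : 0 < L) (hlam : 0 < lam) (hΨ : Ψ ≠ 0)
    (d₁ d₂ : ℝ) (hd₁ : 0 < d₁) (hd : d₁ ≤ d₂) (hd₂ : d₂ < lam / |Ψ|) :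
    d₁ ^ 2 / L ^ 2 *
        (Real.sin (Real.pi * L * Ψ / lam) ^ 2 / Real.sin (Real.pi * d₁ * Ψ / lam) ^ 2) ≤
      d₂ ^ 2 / L ^ 2 *
        (Real.sin (Real.pi * L * Ψ / lam) ^ 2 / Real.sin (Real.pi * d₂ * Ψ / lam) ^ 2) := by
  have hΨ' : 0 < |Ψ| := abs_pos.2 hΨ
  set a₁ := Real.pi * d₁ * |Ψ| / lam with ha₁def
  set a₂ := Real.pi * d₂ * |Ψ| / lam with ha₂def
  have ha₁pos : 0 < a₁ := by positivity
  have ha₁₂ : a₁ ≤ a₂ := by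
    apply div_le_div_of_nonneg_right _ hlam.le |>.trans_eq rfl
    · exact mul_le_mul_of_nonneg_right (mul_le_mul_of_nonneg_left hd Real.pi_pos.le) hΨ'.le
  have ha₂lt : a₂ < Real.pi := by
    rw [ha₂def, div_lt_iff₀ hlam]
    have : d₂ * |Ψ| < lam := by
      have := (lt_div_iff₀ hΨ').1 hd₂
      linarith
    calc Real.pi * d₂ * |Ψ| = Real.pi * (d₂ * |Ψ|) := by ring
      _ < Real.pi * lam := by exact mul_lt_mul_of_pos_left this Real.pi_pos
      _ = Real.pi * lam := rfl
  have ha₂pos : 0 < a₂ := lt_of_lt_of_le ha₁pos ha₁₂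
  have hs₁ : 0 < Real.sin a₁ := Real.sin_pos_of_pos_of_lt_pi ha₁pos (lt_of_le_of_lt ha₁₂ ha₂lt)
  have hs₂ : 0 < Real.sin a₂ := Real.sin_pos_of_pos_of_lt_pi ha₂pos ha₂lt
  -- rewrite sin² of signed argument as sin² of abs argument
  have habs : ∀ d : ℝ, Real.sin (Real.pi * d * Ψ / lam) ^ 2
      = Real.sin (Real.pi * d * |Ψ| / lam) ^ 2 := by
    intro d
    rcases abs_choice Ψ with h | h
    · rw [h]
    · rw [h]
      have : Real.pi * d * -Ψ / lam = -(Real.pi * d * Ψ / lam) := by ring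
      rw [this, Real.sin_neg, neg_pow]
      ring
  rw [habs d₁, habs d₂, ← ha₁def, ← ha₂def]
  -- key inequality: d₁ * sin a₂ ≤ d₂ * sin a₁
  have key : a₁ * Real.sin a₂ ≤ a₂ * Real.sin a₁ := sin_concave_key ha₁pos ha₁₂ ha₂lt
  have key' : d₁ * Real.sin a₂ ≤ d₂ * Real.sin a₁ := by
    have hπlam : 0 < Real.pi * |Ψ| / lam := by positivity
    have e1 : a₁ * Real.sin a₂ = (Real.pi * |Ψ| / lam) * (d₁ * Real.sin a₂) := by
      rw [ha₁def]; ring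
    have e2 : a₂ * Real.sin a₁ = (Real.pi * |Ψ| / lam) * (d₂ * Real.sin a₁) := by
      rw [ha₂def]; ring
    rw [e1, e2] at key
    exact le_of_mul_le_mul_left key hπlam
  have keysq : d₁ ^ 2 * Real.sin a₂ ^ 2 ≤ d₂ ^ 2 * Real.sin a₁ ^ 2 := by
    have h1 : 0 ≤ d₁ * Real.sin a₂ := by positivity
    have := mul_self_le_mul_self h1 key'
    nlinarith
  have hfrac : d₁ ^ 2 / Real.sin a₁ ^ 2 ≤ d₂ ^ 2 / Real.sin a₂ ^ 2 := by
    rw [div_le_div_iff₀ (by positivity) (by positivity)]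
    linarith
  have hS : 0 ≤ Real.sin (Real.pi * L * Ψ / lam) ^ 2 := sq_nonneg _
  calc d₁ ^ 2 / L ^ 2 * (Real.sin (Real.pi * L * Ψ / lam) ^ 2 / Real.sin a₁ ^ 2)
      = (Real.sin (Real.pi * L * Ψ / lam) ^ 2 / L ^ 2) * (d₁ ^ 2 / Real.sin a₁ ^ 2) := by ring
    _ ≤ (Real.sin (Real.pi * L * Ψ / lam) ^ 2 / L ^ 2) * (d₂ ^ 2 / Real.sin a₂ ^ 2) := by
        exact mul_le_mul_of_nonneg_left hfrac (by positivity)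
    _ = d₂ ^ 2 / L ^ 2 * (Real.sin (Real.pi * L * Ψ / lam) ^ 2 / Real.sin a₂ ^ 2) := by ring
end

section
/- Fix λ > 0, H > 0, p₁ > 0, p₂ > 0, Ω ∈ ℝ and Ψ ≠ 0. For L > 0 define the limiting SINRs SINR_ZF(L) = p₁LH·(1 − sinc²(HΩ/λ)·sinc²(LΨ/λ)) and SINR_MR(L) = p₁LH/(p₂LH·sinc²(HΩ/λ)·sinc²(LΨ/λ) + 1). Then lim_{L→∞} [ log₂(1 + SINR_ZF(L)) − log₂(1 + SINR_MR(L)) ] = 0; that is, the spectral efficiency difference between zero-forcing and maximum ratio precoding vanishes as the surface grows infinitely wide. -/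
lemma abs_sinc_le_one (x : ℝ) : |sinc x| ≤ 1 := by
  unfold sinc
  split_ifs with h
  · simp
  · rw [abs_div]
    refine div_le_one_of_le₀ ?_ (abs_nonneg _)
    exact Real.abs_sin_le_abs

lemma sinc_sq_le_one (x : ℝ) : sinc x ^ 2 ≤ 1 := by
  rw [sq_le_one_iff_abs_le_one]; exact abs_sinc_le_one x

lemma sinc_sq_le (x : ℝ) (hx : x ≠ 0) : sinc x ^ 2 ≤ 1 / (Real.pi * x) ^ 2 := by
  unfold sinc
  rw [if_neg hx, div_pow, div_le_div_iff₀ (by positivity) (by positivity), one_mul]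
  calc Real.sin (Real.pi * x) ^ 2 * (Real.pi * x) ^ 2
      ≤ 1 * (Real.pi * x) ^ 2 := by
        apply mul_le_mul_of_nonneg_right _ (by positivity)
        rw [sq_le_one_iff_abs_le_one]
        exact Real.abs_sin_le_one _
    _ = (Real.pi * x) ^ 2 := by ring

/-- Lemma 5: the spectral efficiency difference between zero-forcing and
maximum ratio precoding vanishes as the surface width `L → ∞`. -/
theorem zf_mr_gap_vanishes (lam H Ω Ψ p₁ p₂ : ℝ)
    (hlam : 0 < lam) (hH : 0 < H) (hΨ : Ψ ≠ 0) (hp₁ : 0 < p₁) (hp₂ : 0 < p₂) :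
    Filter.Tendsto
      (fun L : ℝ =>
        Real.logb 2 (1 + p₁ * L * H *
            (1 - sinc (H * Ω / lam) ^ 2 * sinc (L * Ψ / lam) ^ 2)) -
        Real.logb 2 (1 + p₁ * L * H /
            (p₂ * L * H * (sinc (H * Ω / lam) ^ 2 * sinc (L * Ψ / lam) ^ 2) + 1)))
      Filter.atTop (nhds 0) := by
  set c : ℝ := sinc (H * Ω / lam) ^ 2 with hc
  have hc0 : 0 ≤ c := sq_nonneg _
  have hc1 : c ≤ 1 := sinc_sq_le_one _
  set s : ℝ → ℝ := fun L => sinc (L * Ψ / lam) ^ 2 with hs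
  have hs0 : ∀ L, 0 ≤ s L := fun L => sq_nonneg _
  have hs1 : ∀ L, s L ≤ 1 := fun L => sinc_sq_le_one _
  set t : ℝ → ℝ := fun L => L * s L with ht
  set A : ℝ → ℝ := fun L => 1 + p₁ * L * H * (1 - c * s L) with hA
  set B : ℝ → ℝ := fun L => 1 + p₁ * L * H / (p₂ * L * H * (c * s L) + 1) with hB
  set u : ℝ → ℝ := fun L => 1 + p₁ * L * H with hu
  -- basic eventual bounds
  have hApos : ∀ L, 0 < L → 1 ≤ A L := by
    intro L hL
    have hcs : c * s L ≤ 1 := mul_le_one₀ hc1 (hs0 L) (hs1 L)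
    have : 0 ≤ p₁ * L * H * (1 - c * s L) := by
      apply mul_nonneg (by positivity) (by linarith)
    simp only [hA]; linarith
  have hdpos : ∀ L, 0 < L → (1:ℝ) ≤ p₂ * L * H * (c * s L) + 1 := by
    intro L hL
    have : 0 ≤ p₂ * L * H * (c * s L) := by
      apply mul_nonneg (by positivity) (mul_nonneg hc0 (hs0 L))
    linarith
  have hBpos : ∀ L, 0 < L → 1 ≤ B L := by
    intro L hL
    have h1 := hdpos L hL
    have : 0 ≤ p₁ * L * H / (p₂ * L * H * (c * s L) + 1) := by
      apply div_nonneg (by positivity) (by linarith)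
    simp only [hB]; linarith
  have hupos : ∀ L, 0 < L → (1:ℝ) ≤ u L := by
    intro L hL
    have : 0 ≤ p₁ * L * H := by positivity
    simp only [hu]; linarith
  -- t → 0
  have htend : Filter.Tendsto t Filter.atTop (nhds 0) := by
    apply squeeze_zero' (g := fun L => lam ^ 2 / (Real.pi ^ 2 * Ψ ^ 2) * (1 / L))
    · filter_upwards [Filter.eventually_gt_atTop 0] with L hL
      exact mul_nonneg hL.le (hs0 L)
    · filter_upwards [Filter.eventually_gt_atTop 0] with L hL
      have hx : L * Ψ / lam ≠ 0 :=
        div_ne_zero (mul_ne_zero hL.ne' hΨ) hlam.ne'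
      have h2 : t L ≤ L * (1 / (Real.pi * (L * Ψ / lam)) ^ 2) :=
        mul_le_mul_of_nonneg_left (sinc_sq_le (L * Ψ / lam) hx) hL.le
      refine h2.trans (le_of_eq ?_)
      have hπ := Real.pi_ne_zero
      field_simp
    · have h1 : Filter.Tendsto (fun L : ℝ => 1 / L) Filter.atTop (nhds 0) := by
        simpa using tendsto_inv_atTop_zero
      simpa using h1.const_mul (lam ^ 2 / (Real.pi ^ 2 * Ψ ^ 2))
  -- u → ∞
  have hutend : Filter.Tendsto u Filter.atTop Filter.atTop := by
    apply Filter.tendsto_atTop_add_const_left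
    have : Filter.Tendsto (fun L : ℝ => (p₁ * H) * L) Filter.atTop Filter.atTop :=
      Filter.Tendsto.const_mul_atTop (by positivity) Filter.tendsto_id
    exact this.congr (fun L => by ring)
  have huinv : Filter.Tendsto (fun L => 1 / u L) Filter.atTop (nhds 0) :=
    Filter.Tendsto.div_atTop tendsto_const_nhds hutend
  -- t/u → 0
  have htu : Filter.Tendsto (fun L => t L / u L) Filter.atTop (nhds 0) := by
    have := htend.mul huinv
    simpa [div_eq_mul_inv, mul_comm] using this.congr (fun L => by ring)
  -- A/u → 1
  have hAu : Filter.Tendsto (fun L => A L / u L) Filter.atTop (nhds 1) := by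
    have hlim : Filter.Tendsto (fun L => 1 - (p₁ * H * c) * (t L / u L))
        Filter.atTop (nhds 1) := by
      have := (htu.const_mul (p₁ * H * c)).const_sub 1
      simpa using this
    apply hlim.congr'
    filter_upwards [Filter.eventually_gt_atTop 0] with L hL
    have hune : u L ≠ 0 := by have := hupos L hL; linarith
    field_simp [hA, hu, ht]
    ring
  -- B/u → 1
  have hdtend : Filter.Tendsto (fun L => p₂ * H * c * t L + 1) Filter.atTop (nhds 1) := by
    have := (htend.const_mul (p₂ * H * c)).add_const 1
    simpa using this
  have hBu : Filter.Tendsto (fun L => B L / u L) Filter.atTop (nhds 1) := by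
    have h2 : Filter.Tendsto (fun L => 1 / u L + (1 - 1 / u L) / (p₂ * H * c * t L + 1))
        Filter.atTop (nhds 1) := by
      have := huinv.add (((huinv.const_sub 1)).div hdtend one_ne_zero)
      simpa using this
    apply h2.congr'
    filter_upwards [Filter.eventually_gt_atTop 0] with L hL
    have hune : u L ≠ 0 := by have := hupos L hL; linarith
    have hdne : p₂ * L * H * (c * s L) + 1 ≠ 0 := by have := hdpos L hL; linarith
    have hdeq : p₂ * H * c * t L + 1 = p₂ * L * H * (c * s L) + 1 := by
      simp only [ht]; ring
    rw [hdeq]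
    field_simp [hB, hu]
    simp only [hB, hu]
    ring
  -- A/B → 1
  have hAB : Filter.Tendsto (fun L => A L / B L) Filter.atTop (nhds 1) := by
    have h2 := hAu.div hBu one_ne_zero
    rw [div_one] at h2
    apply h2.congr'
    filter_upwards [Filter.eventually_gt_atTop 0] with L hL
    have hune : u L ≠ 0 := by have := hupos L hL; linarith
    simp only [Pi.div_apply]
    rw [div_div_div_comm, div_self hune, div_one]
  -- conclude
  have hlogb : Filter.Tendsto (fun L => Real.logb 2 (A L / B L)) Filter.atTop (nhds 0) := by
    have hcont : Filter.Tendsto (Real.logb 2) (nhds 1) (nhds 0) := by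
      have := (Real.continuousAt_logb (b := 2) (x := 1) one_ne_zero).tendsto
      simpa using this
    exact hcont.comp hAB
  apply hlogb.congr'
  filter_upwards [Filter.eventually_gt_atTop 0] with L hL
  have hAne : A L ≠ 0 := by have := hApos L hL; linarith
  have hBne : B L ≠ 0 := by have := hBpos L hL; linarith
  rw [Real.logb_div hAne hBne]
end

section
/- Let K be a positive integer, let b₁,…,b_K > 0, c₁,…,c_K > 0 and Q > 0. Let U : [0,∞) → ℝ be continuous, concave, strictly increasing, and differentiable on (0,∞), with derivative U′ a strictly decreasing bijection from (0,∞) onto (0, B) for some B ∈ (0,∞], and let h : (0,B) → (0,∞) denote the inverse of U′. Suppose ν > 0 is such that the powers ρ*ᵢ defined by ρ*ᵢ = (1/bᵢ)·h(cᵢ/(νbᵢ)) if cᵢ/(νbᵢ) < B and ρ*ᵢ = 0 otherwise, satisfy ∑_{i=1}^{K} ρ*ᵢ cᵢ = Q. Then (ρ*₁,…,ρ*_K) maximizes the total utility ∑_{i=1}^{K} U(ρᵢbᵢ) over all (ρ₁,…,ρ_K) with ρᵢ ≥ 0 for all i and ∑_{i=1}^{K} ρᵢcᵢ ≤ Q.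 -/
/-- Tangent line inequality for a function with antitone derivative on `(0,∞)`. -/
lemma tangent_le_aux (U U' : ℝ → ℝ)
    (hUcont : ContinuousOn U (Set.Ici 0))
    (hUderiv : ∀ x ∈ Set.Ioi (0 : ℝ), HasDerivAt U (U' x) x)
    (hU'anti : StrictAntiOn U' (Set.Ioi 0))
    {x xs : ℝ} (hx : 0 ≤ x) (hxs : 0 < xs) :
    U x ≤ U xs + U' xs * (x - xs) := by
  rcases lt_trichotomy x xs with hlt | heq | hgt
  · obtain ⟨ξ, hξ, hslope⟩ := exists_hasDerivAt_eq_slope U U' hlt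
      (hUcont.mono (Set.Icc_subset_Ici_iff hlt.le |>.2 hx))
      (fun z hz => hUderiv z (lt_of_le_of_lt hx hz.1))
    have hξ0 : (0:ℝ) < ξ := lt_of_le_of_lt hx hξ.1
    have hge : U' xs ≤ U' ξ := (hU'anti hξ0 hxs hξ.2).le
    have hne : xs - x ≠ 0 := by linarith
    have : U xs - U x = U' ξ * (xs - x) := (div_eq_iff hne).1 hslope.symm
    nlinarith
  · subst heq; simp
  · obtain ⟨ξ, hξ, hslope⟩ := exists_hasDerivAt_eq_slope U U' hgt
      (hUcont.mono (Set.Icc_subset_Ici_iff hgt.le |>.2 hxs.le))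
      (fun z hz => hUderiv z (lt_trans hxs hz.1))
    have hle : U' ξ ≤ U' xs := (hU'anti hxs (lt_trans hxs hξ.1) hξ.1).le
    have hne : x - xs ≠ 0 := by linarith
    have : U x - U xs = U' ξ * (x - xs) := (div_eq_iff hne).1 hslope.symm
    nlinarith

/-- Lemma 6: utility-maximizing power allocation. Let `U` be a continuous,
concave, strictly increasing utility, differentiable on `(0,∞)` with derivative
`U'` a strictly decreasing bijection from `(0,∞)` onto `(0,B)` (with `B ∈ (0,∞]`,
modeled as an extended real), and let `h` be the inverse of `U'`. If `ν > 0` is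
such that the powers `ρ*ᵢ = (1/bᵢ)·h(cᵢ/(νbᵢ))` (set to `0` when `cᵢ/(νbᵢ) ≥ B`)
satisfy the total power constraint with equality, then `ρ*` maximizes
`∑ᵢ U(ρᵢbᵢ)` subject to `ρᵢ ≥ 0` and `∑ᵢ ρᵢcᵢ ≤ Q`. -/
theorem utility_maximizing_power_allocation
    (K : ℕ) (hK : 0 < K) (b c : Fin K → ℝ)
    (hb : ∀ i, 0 < b i) (hc : ∀ i, 0 < c i) (Q : ℝ) (hQ : 0 < Q)
    (U U' h : ℝ → ℝ) (B : EReal) (hB : 0 < B)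
    (hUcont : ContinuousOn U (Set.Ici 0))
    (hUconc : ConcaveOn ℝ (Set.Ici 0) U)
    (hUmono : StrictMonoOn U (Set.Ici 0))
    (hUderiv : ∀ x ∈ Set.Ioi (0 : ℝ), HasDerivAt U (U' x) x)
    (hU'anti : StrictAntiOn U' (Set.Ioi 0))
    (hU'bij : Set.BijOn U' (Set.Ioi 0) {y : ℝ | 0 < y ∧ (y : EReal) < B})
    (hinv : ∀ y : ℝ, 0 < y → (y : EReal) < B → 0 < h y ∧ U' (h y) = y)
    (ν : ℝ) (hν : 0 < ν) (ρstar : Fin K → ℝ)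
    (hρstar : ∀ i, ρstar i =
      if ((c i / (ν * b i) : ℝ) : EReal) < B then (1 / b i) * h (c i / (ν * b i)) else 0)
    (hsum : ∑ i, ρstar i * c i = Q) :
    ∀ ρ : Fin K → ℝ, (∀ i, 0 ≤ ρ i) → ∑ i, ρ i * c i ≤ Q →
      ∑ i, U (ρ i * b i) ≤ ∑ i, U (ρstar i * b i) := by
  intro ρ hρpos hρQ
  have key : ∀ i, U (ρ i * b i) ≤ U (ρstar i * b i) + (c i / ν) * (ρ i - ρstar i) := by
    intro i
    set y := c i / (ν * b i) with hy
    have hy0 : 0 < y := div_pos (hc i) (mul_pos hν (hb i))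
    have hyb : y * b i = c i / ν := by
      rw [hy]; field_simp [(hb i).ne', hν.ne']
    by_cases hcase : ((y : ℝ) : EReal) < B
    · have hρs : ρstar i = (1 / b i) * h y := by rw [hρstar i, if_pos hcase]
      obtain ⟨hh0, hUh⟩ := hinv y hy0 hcase
      have hxs : ρstar i * b i = h y := by
        rw [hρs]; field_simp [(hb i).ne']
      have := tangent_le_aux U U' hUcont hUderiv hU'anti
        (mul_nonneg (hρpos i) (hb i).le) hh0 (x := ρ i * b i)
      rw [hUh] at this
      calc U (ρ i * b i) ≤ U (h y) + y * (ρ i * b i - h y) := this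
        _ = U (ρstar i * b i) + (c i / ν) * (ρ i - ρstar i) := by
            rw [← hxs, ← hyb]; ring
    · have hρs : ρstar i = 0 := by rw [hρstar i, if_neg hcase]
      rcases eq_or_lt_of_le (hρpos i) with h0 | h0
      · rw [hρs, ← h0]
        simp
      · have hxb : 0 < ρ i * b i := mul_pos h0 (hb i)
        obtain ⟨ξ, hξ, hslope⟩ := exists_hasDerivAt_eq_slope U U' hxb
          (hUcont.mono (by rw [Set.Icc_subset_Ici_iff hxb.le]))
          (fun z hz => hUderiv z hz.1)
        have hξmem := hU'bij.mapsTo hξ.1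
        have hξB : ((U' ξ : ℝ) : EReal) < B := hξmem.2
        have hU'y : U' ξ ≤ y := by
          have : ((U' ξ : ℝ) : EReal) < ((y : ℝ) : EReal) := lt_of_lt_of_le hξB (not_lt.1 hcase)
          exact_mod_cast this.le
        have hEq : U (ρ i * b i) - U 0 = U' ξ * (ρ i * b i - 0) := by
          exact (div_eq_iff (by linarith : ρ i * b i - 0 ≠ 0)).1 hslope.symm
        have : U (ρ i * b i) ≤ U 0 + y * (ρ i * b i) := by nlinarith
        calc U (ρ i * b i) ≤ U 0 + y * (ρ i * b i) := this
          _ = U (ρstar i * b i) + (c i / ν) * (ρ i - ρstar i) := by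
              rw [hρs, zero_mul, ← hyb]; ring
  calc ∑ i, U (ρ i * b i)
      ≤ ∑ i, (U (ρstar i * b i) + (c i / ν) * (ρ i - ρstar i)) :=
        Finset.sum_le_sum fun i _ => key i
    _ = ∑ i, U (ρstar i * b i) + (1/ν) * (∑ i, ρ i * c i - ∑ i, ρstar i * c i) := by
        rw [Finset.sum_add_distrib]
        congr 1
        rw [mul_sub, Finset.mul_sum, Finset.mul_sum, ← Finset.sum_sub_distrib]
        exact Finset.sum_congr rfl fun i _ => by ring
    _ ≤ ∑ i, U (ρstar i * b i) := by
        rw [hsum]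
        have h1 : 1/ν * (∑ i, ρ i * c i - Q) ≤ 0 :=
          mul_nonpos_iff.2 (Or.inl ⟨le_of_lt (by positivity), by linarith⟩)
        linarith
end
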